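/- arXiv:2010.05862 — 2 statements merged into one kernel-verified Lean document; each statement's English description precedes it below -/
import Mathlib

section
/- Let (X,d) be a metric space, let x_1,…,x_M and y_1,…,y_N be points of X, and let p ∈ Δ^M, q ∈ Δ^N be probability vectors with strictly positive entries. For all ρ₁, ρ₂ ≥ 0, the discrete robust optimal transport cost admits the Kantorovich–Rubinstein-type dual form: W^rob_{ρ₁,ρ₂}(p,q) = inf over probability vectors p̃ ∈ Δ^M and q̃ ∈ Δ^N satisfying D_{χ²}(p̃‖p) ≤ ρ₁ and D_{χ²}(q̃‖q) ≤ ρ₂ of [ sup over functions D : X → ℝ that are 1-Lipschitz (|D(x)−D(x')| ≤ d(x,x') for all x,x') of Σ_{i=1}^M p̃_i D(x_i) − Σ_{j=1}^N q̃_j D(y_j) ]. -/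
/-! Both sides are infima over the same χ²-balls, so it suffices to prove, for fixed marginals,
Kantorovich–Rubinstein duality for finitely supported measures. A 1-Lipschitz
`D` gives the potentials `D (x i)`, `-D (y j)`, which lie below the cost, whence weak duality.
Conversely, if `t` lies below the cost of every transport plan, then `(p, q, t)` is outside the
compact convex image of the simplex under `π ↦ (marginals of π, cost of π)`; a separating
functional yields potentials with `F i + g j ≤ d(x i, y j)` and `∑ p F + ∑ q g > t`, and the
c-transform `D z = min_j (d(z, y j) - g j)` is 1-Lipschitz with `F i ≤ D (x i)`, `D (y j) ≤ -g j`. -/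

open Finset

/-- Discrete optimal transport cost between weighted point configurations. -/
noncomputable def discreteW {X : Type*} [MetricSpace X] {M N : ℕ}
    (x : Fin M → X) (y : Fin N → X) (p : Fin M → ℝ) (q : Fin N → ℝ) : ℝ :=
  sInf { c : ℝ | ∃ π : Fin M → Fin N → ℝ,
    (∀ i j, 0 ≤ π i j) ∧ (∀ i, ∑ j, π i j = p i) ∧ (∀ j, ∑ i, π i j = q j) ∧
    c = ∑ i, ∑ j, π i j * dist (x i) (y j) }

/-- `p` is a probability vector. -/
def IsProbVec {M : ℕ} (p : Fin M → ℝ) : Prop := (∀ i, 0 ≤ p i) ∧ ∑ i, p i = 1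

/-- χ²-divergence between probability vectors, with generator f(t) = (t-1)²/2. -/
noncomputable def chiSqDiv {M : ℕ} (pt p : Fin M → ℝ) : ℝ :=
  ∑ i, p i * ((pt i / p i - 1) ^ 2 / 2)

/-- Robust optimal transport cost with marginal χ²-relaxation budgets ρ₁, ρ₂. -/
noncomputable def robustW {X : Type*} [MetricSpace X] {M N : ℕ}
    (x : Fin M → X) (y : Fin N → X) (p : Fin M → ℝ) (q : Fin N → ℝ) (ρ₁ ρ₂ : ℝ) : ℝ :=
  sInf { c : ℝ | ∃ pt qt, IsProbVec pt ∧ IsProbVec qt ∧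
    chiSqDiv pt p ≤ ρ₁ ∧ chiSqDiv qt q ≤ ρ₂ ∧ c = discreteW x y pt qt }

section Transport

variable {ι κ : Type*} [Fintype ι] [Fintype κ]

def transportPlans (p : ι → ℝ) (q : κ → ℝ) : Set (ι → κ → ℝ) :=
  {π | (∀ i j, 0 ≤ π i j) ∧ (∀ i, ∑ j, π i j = p i) ∧ (∀ j, ∑ i, π i j = q j)}

def transportCost (c : ι → κ → ℝ) (π : ι → κ → ℝ) : ℝ :=
  ∑ i, ∑ j, π i j * c i j

theorem prod_mem_transportPlans {p : ι → ℝ} {q : κ → ℝ} (hp : p ∈ stdSimplex ℝ ι)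
    (hq : q ∈ stdSimplex ℝ κ) : (fun i j => p i * q j) ∈ transportPlans p q :=
  ⟨fun i j => mul_nonneg (hp.1 i) (hq.1 j),
    fun i => by rw [← mul_sum, hq.2, mul_one], fun j => by rw [← sum_mul, hp.2, one_mul]⟩

theorem sum_mul_add_sum_mul_le_transportCost {c : ι → κ → ℝ} {p : ι → ℝ} {q : κ → ℝ}
    {F : ι → ℝ} {g : κ → ℝ} (hFg : ∀ i j, F i + g j ≤ c i j) {π : ι → κ → ℝ}
    (hπ : π ∈ transportPlans p q) :
    ∑ i, p i * F i + ∑ j, q j * g j ≤ transportCost c π := by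
  obtain ⟨hπ0, hrow, hcol⟩ := hπ
  calc ∑ i, p i * F i + ∑ j, q j * g j = ∑ i, ∑ j, π i j * (F i + g j) := by
        simp only [← hrow, ← hcol, sum_mul, mul_add, sum_add_distrib]
        rw [sum_comm (s := univ) (t := univ) (f := fun j i => π i j * g j)]
    _ ≤ transportCost c π :=
        sum_le_sum fun i _ => sum_le_sum fun j _ => mul_le_mul_of_nonneg_left (hFg i j) (hπ0 i j)

def marginalCostMap (c : ι → κ → ℝ) : (ι × κ → ℝ) →ₗ[ℝ] (ι → ℝ) × (κ → ℝ) × ℝ where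
  toFun π := (fun i => ∑ j, π (i, j), fun j => ∑ i, π (i, j), transportCost c (Function.curry π))
  map_add' _ _ := by
    ext <;> simp [transportCost, sum_add_distrib, add_mul]
  map_smul' _ _ := by
    ext <;> simp [transportCost, mul_sum, mul_assoc]

theorem marginalCostMap_single [DecidableEq ι] [DecidableEq κ] (c : ι → κ → ℝ) (i : ι) (j : κ) :
    marginalCostMap c (Pi.single (i, j) 1) = (Pi.single i 1, Pi.single j 1, c i j) := by
  ext k <;> simp [marginalCostMap, transportCost, Pi.single_apply, ite_and]

theorem uncurry_mem_stdSimplex {p : ι → ℝ} {q : κ → ℝ} (hp : ∑ i, p i = 1) {π : ι → κ → ℝ}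
    (hπ : π ∈ transportPlans p q) : Function.uncurry π ∈ stdSimplex ℝ (ι × κ) := by
  refine ⟨fun k => hπ.1 k.1 k.2, ?_⟩
  simp only [Fintype.sum_prod_type, Function.uncurry_apply_pair, hπ.2.1, hp]

theorem marginalCostMap_uncurry (c : ι → κ → ℝ) {p : ι → ℝ} {q : κ → ℝ} {π : ι → κ → ℝ}
    (hπ : π ∈ transportPlans p q) :
    marginalCostMap c (Function.uncurry π) = (p, q, transportCost c π) := by
  simp only [marginalCostMap, LinearMap.coe_mk, AddHom.coe_mk, Function.uncurry_apply_pair,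
    Function.curry_uncurry, hπ.2.1, hπ.2.2]

theorem LinearMap.apply_prod_prod_eq_sum [DecidableEq ι] [DecidableEq κ]
    (f : (ι → ℝ) × (κ → ℝ) × ℝ →ₗ[ℝ] ℝ) (a : ι → ℝ) (b : κ → ℝ) (t : ℝ) :
    f (a, b, t) = ∑ i, a i * f (Pi.single i 1, 0, 0) + ∑ j, b j * f (0, Pi.single j 1, 0)
      + t * f (0, 0, 1) := by
  have hsplit : ((a, b, t) : (ι → ℝ) × (κ → ℝ) × ℝ) =
      ∑ i, a i • (Pi.single i 1, 0, 0) + ∑ j, b j • (0, Pi.single j 1, 0) + t • (0, 0, 1) := by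
    ext <;> simp [Prod.fst_sum, Prod.snd_sum, Pi.single_apply]
  simp only [hsplit, map_add, map_sum, map_smul, smul_eq_mul]

theorem exists_potentials_of_lt_transportCost (c : ι → κ → ℝ) {p : ι → ℝ} {q : κ → ℝ}
    (hp : p ∈ stdSimplex ℝ ι) (hq : q ∈ stdSimplex ℝ κ) {t : ℝ}
    (ht : ∀ π ∈ transportPlans p q, t < transportCost c π) :
    ∃ (F : ι → ℝ) (g : κ → ℝ), (∀ i j, F i + g j ≤ c i j) ∧
      t < ∑ i, p i * F i + ∑ j, q j * g j := by
  classical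
  set T := marginalCostMap c
  have hT : (p, q, t) ∉ T '' stdSimplex ℝ (ι × κ) := by
    rintro ⟨π, hπ, hTπ⟩
    simp only [T, marginalCostMap, LinearMap.coe_mk, AddHom.coe_mk, Prod.mk.injEq,
      funext_iff] at hTπ
    exact (ht _ ⟨fun i j => hπ.1 (i, j), hTπ.1, hTπ.2.1⟩).ne hTπ.2.2.symm
  obtain ⟨f, u, hfT, hfz⟩ := geometric_hahn_banach_closed_point
    ((convex_stdSimplex ℝ _).linear_image T)
    ((isCompact_stdSimplex ℝ _).image T.continuous_of_finiteDimensional).isClosed hT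
  set A : ι → ℝ := fun i => f (Pi.single i 1, 0, 0)
  set B : κ → ℝ := fun j => f (0, Pi.single j 1, 0)
  set γ := f (0, 0, 1)
  have hf : ∀ a b s, f (a, b, s) = ∑ i, a i * A i + ∑ j, b j * B j + s * γ :=
    LinearMap.apply_prod_prod_eq_sum f.toLinearMap
  have hcorner : ∀ i j, A i + B j + c i j * γ < u := fun i j => by
    have := hfT _ ⟨_, single_mem_stdSimplex ℝ (i, j), rfl⟩
    rw [marginalCostMap_single, hf] at this
    simpa [Pi.single_apply] using this
  -- The product plan lies in the image and costs more than `t`, which forces `γ < 0`.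
  have hγ : 0 < -γ := by
    obtain ⟨π₀, hπ₀⟩ : (transportPlans p q).Nonempty := ⟨_, prod_mem_transportPlans hp hq⟩
    have hlt := hfT _ ⟨_, uncurry_mem_stdSimplex hp.2 hπ₀, marginalCostMap_uncurry c hπ₀⟩
    rw [hf] at hlt hfz
    have : (transportCost c π₀ - t) * γ < 0 := by linarith
    exact neg_pos.2 (neg_of_mul_neg_right this (sub_pos.2 (ht _ hπ₀)).le)
  refine ⟨fun i => (A i - u) / -γ, fun j => B j / -γ, fun i j => ?_, ?_⟩
  · rw [← add_div, div_le_iff₀ hγ]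
    linarith [hcorner i j]
  · rw [hf] at hfz
    have : ∑ i, p i * ((A i - u) / -γ) + ∑ j, q j * (B j / -γ) =
        (∑ i, p i * A i + ∑ j, q j * B j - u) / -γ := by
      simp only [mul_div_assoc', ← sum_div, mul_sub, sum_sub_distrib, ← sum_mul, hp.2]
      ring
    rw [this, lt_div_iff₀ hγ]
    linarith

end Transport

section KantorovichRubinstein

variable {X : Type*}

theorem exists_lipschitz_of_add_le_dist [PseudoMetricSpace X] {ι κ : Type*} [Fintype κ]
    [Nonempty κ] {x : ι → X} {y : κ → X} {F : ι → ℝ} {g : κ → ℝ}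
    (hFg : ∀ i j, F i + g j ≤ dist (x i) (y j)) :
    ∃ D : X → ℝ, (∀ a b, |D a - D b| ≤ dist a b) ∧ (∀ i, F i ≤ D (x i)) ∧
      ∀ j, D (y j) ≤ -g j := by
  set D : X → ℝ := fun z => univ.inf' univ_nonempty fun j => dist z (y j) - g j
  have hD : ∀ z j, D z ≤ dist z (y j) - g j := fun z j => inf'_le _ (mem_univ j)
  have hDle : ∀ a b, D a ≤ dist a b + D b := fun a b => by
    rw [← sub_le_iff_le_add']
    exact le_inf' _ _ fun j _ => by linarith [hD a j, dist_triangle a b (y j)]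
  refine ⟨D, fun a b => abs_sub_le_iff.2 ⟨?_, ?_⟩, fun i => ?_, fun j => ?_⟩
  · linarith [hDle a b]
  · linarith [hDle b a, dist_comm a b]
  · exact le_inf' _ _ fun j _ => le_sub_iff_add_le.2 (hFg i j)
  · simpa using hD (y j) j

variable [MetricSpace X] {M N : ℕ} (x : Fin M → X) (y : Fin N → X)

theorem discreteW_eq_sInf_transportCost (p : Fin M → ℝ) (q : Fin N → ℝ) :
    discreteW x y p q =
      sInf (transportCost (fun i j => dist (x i) (y j)) '' transportPlans p q) := by
  unfold discreteW
  congr 1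
  ext
  simp [transportPlans, transportCost, eq_comm, and_assoc]

theorem discreteW_eq_sSup_lipschitz {p : Fin M → ℝ} {q : Fin N → ℝ} (hp : IsProbVec p)
    (hq : IsProbVec q) :
    discreteW x y p q = sSup { w : ℝ | ∃ D : X → ℝ,
      (∀ a b : X, |D a - D b| ≤ dist a b) ∧
      w = ∑ i, p i * D (x i) - ∑ j, q j * D (y j) } := by
  set c : Fin M → Fin N → ℝ := fun i j => dist (x i) (y j)
  have hne : (transportCost c '' transportPlans p q).Nonempty :=
    ⟨_, _, prod_mem_transportPlans hp hq, rfl⟩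
  have hbdd : BddBelow (transportCost c '' transportPlans p q) :=
    ⟨0, Set.forall_mem_image.2 fun π hπ =>
      sum_nonneg fun i _ => sum_nonneg fun j _ => mul_nonneg (hπ.1 i j) dist_nonneg⟩
  have : Nonempty (Fin N) :=
    univ_nonempty_iff.1 (nonempty_of_sum_ne_zero (hq.2.symm ▸ one_ne_zero))
  rw [discreteW_eq_sInf_transportCost, eq_comm]
  refine csSup_eq_of_forall_le_of_forall_lt_exists_gt ⟨0, fun _ => 0, by simp, by simp⟩
    ?_ fun t ht => ?_
  · rintro _ ⟨D, hD, rfl⟩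
    refine le_csInf hne (Set.forall_mem_image.2 fun π hπ => ?_)
    have := sum_mul_add_sum_mul_le_transportCost (F := D ∘ x) (g := fun j => -D (y j))
      (fun i j => (le_abs_self _).trans (hD (x i) (y j))) hπ
    simpa [sub_eq_add_neg] using this
  · obtain ⟨F, g, hFg, hlt⟩ := exists_potentials_of_lt_transportCost c hp hq
      fun π hπ => ht.trans_le (csInf_le hbdd ⟨π, hπ, rfl⟩)
    obtain ⟨D, hD, hFD, hDg⟩ := exists_lipschitz_of_add_le_dist hFg
    refine ⟨_, ⟨D, hD, rfl⟩, hlt.trans_le ?_⟩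
    simp only [sub_eq_add_neg, ← sum_neg_distrib, ← mul_neg]
    gcongr with i _ j _
    exacts [hp.1 i, hFD i, hq.1 j, le_neg_of_le_neg (hDg j)]

end KantorovichRubinstein

theorem robustW_dual_lipschitz_general {X : Type*} [MetricSpace X] {M N : ℕ}
    (x : Fin M → X) (y : Fin N → X) (p : Fin M → ℝ) (q : Fin N → ℝ)
    (ρ₁ ρ₂ : ℝ) :
    robustW x y p q ρ₁ ρ₂ =
      sInf { v : ℝ | ∃ pt qt, IsProbVec pt ∧ IsProbVec qt ∧
        chiSqDiv pt p ≤ ρ₁ ∧ chiSqDiv qt q ≤ ρ₂ ∧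
        v = sSup { w : ℝ | ∃ D : X → ℝ,
          (∀ a b : X, |D a - D b| ≤ dist a b) ∧
          w = ∑ i, pt i * D (x i) - ∑ j, qt j * D (y j) } } := by
  unfold robustW
  congr 1
  ext v
  constructor <;> rintro ⟨pt, qt, hpt, hqt, h₁, h₂, rfl⟩ <;>
    exact ⟨pt, qt, hpt, hqt, h₁, h₂, by rw [discreteW_eq_sSup_lipschitz x y hpt hqt]⟩

theorem robustW_dual_lipschitz {X : Type*} [MetricSpace X] {M N : ℕ}
    (x : Fin M → X) (y : Fin N → X) (p : Fin M → ℝ) (q : Fin N → ℝ)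
    (hp : IsProbVec p) (hq : IsProbVec q) (hp' : ∀ i, 0 < p i) (hq' : ∀ j, 0 < q j)
    (ρ₁ ρ₂ : ℝ) (hρ₁ : 0 ≤ ρ₁) (hρ₂ : 0 ≤ ρ₂) :
    robustW x y p q ρ₁ ρ₂ =
      sInf { v : ℝ | ∃ pt qt, IsProbVec pt ∧ IsProbVec qt ∧
        chiSqDiv pt p ≤ ρ₁ ∧ chiSqDiv qt q ≤ ρ₂ ∧
        v = sSup { w : ℝ | ∃ D : X → ℝ,
          (∀ a b : X, |D a - D b| ≤ dist a b) ∧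
          w = ∑ i, pt i * D (x i) - ∑ j, qt j * D (y j) } } :=
  robustW_dual_lipschitz_general x y p q ρ₁ ρ₂
end

section
/- Let (X,d) be a metric space, let a_1,…,a_{n_a} (outlier points), c_1,…,c_{n_c} (clean points), and y_1,…,y_N be points of X with n_a ≥ 1, n_c ≥ 1, N ≥ 1, and set γ = n_a/(n_a+n_c) (so γ < 1). Let p_a, p_c be the uniform vectors on the outlier and clean points, let p_X be the uniform vector on all n_a+n_c points, and let q ∈ Δ^N be the uniform vector on y_1,…,y_N. Suppose W(p_a, p_c) = k · W(p_c, q) for some k ≥ 1. Then choosing ρ = γ/(2(1−γ)) yields W^rob_{ρ,0}(p_X, q) ≤ W(p_c, q). -/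
/-!
Discard the outliers: the vector `p̃` that is zero on `a` and uniform on `c` lies at χ²-distance
`n_a / (2 n_c) = γ / (2 (1 - γ))` from `p_X`, and points of zero mass do not change the transport
cost, so `W(p̃, q) = W(p_c, q)`.
-/

open Finset

theorem discreteW_nonneg {X : Type*} [MetricSpace X] {M N : ℕ}
    (x : Fin M → X) (y : Fin N → X) (p : Fin M → ℝ) (q : Fin N → ℝ) :
    0 ≤ discreteW x y p q := by
  apply Real.sInf_nonneg
  rintro w ⟨π, hπ, -, -, rfl⟩
  exact sum_nonneg fun i _ => sum_nonneg fun j _ => mul_nonneg (hπ i j) dist_nonneg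

/-- A plan for the padded marginal vanishes on the zero rows, so both problems have the same
set of costs. -/
theorem discreteW_append_zero_left {X : Type*} [MetricSpace X] {m n N : ℕ}
    (a : Fin m → X) (c : Fin n → X) (y : Fin N → X) (p : Fin n → ℝ) (q : Fin N → ℝ) :
    discreteW (Fin.append a c) y (Fin.append (fun _ => 0) p) q = discreteW c y p q := by
  unfold discreteW
  congr 1
  ext w
  constructor
  · rintro ⟨π, hπ, hrow, hcol, rfl⟩
    have hzero : ∀ i j, π (Fin.castAdd n i) j = 0 := fun i j => by
      have h := hrow (Fin.castAdd n i)
      rw [Fin.append_left] at h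
      exact (sum_eq_zero_iff_of_nonneg fun j _ => hπ _ j).1 h j (mem_univ j)
    refine ⟨fun i j => π (Fin.natAdd m i) j, fun i j => hπ _ j, fun i => ?_, fun j => ?_, ?_⟩
    · simpa only [Fin.append_right] using hrow (Fin.natAdd m i)
    · simpa only [Fin.sum_univ_add, hzero, sum_const_zero, zero_add] using hcol j
    · simp only [Fin.sum_univ_add, hzero, zero_mul, sum_const_zero, zero_add, Fin.append_right]
  · rintro ⟨π, hπ, hrow, hcol, rfl⟩
    refine ⟨Fin.append (fun _ _ => 0) π, fun i j => ?_, fun i => ?_, fun j => ?_, ?_⟩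
    · refine Fin.addCases (fun i => ?_) (fun i => ?_) i
      · simp only [Fin.append_left, le_refl]
      · simpa only [Fin.append_right] using hπ i j
    · refine Fin.addCases (fun i => ?_) (fun i => ?_) i
      · simp only [Fin.append_left, sum_const_zero]
      · simpa only [Fin.append_right] using hrow i
    · simpa only [Fin.sum_univ_add, Fin.append_left, Fin.append_right, sum_const_zero,
        zero_add] using hcol j
    · simp only [Fin.sum_univ_add, Fin.append_left, Fin.append_right, zero_mul, sum_const_zero,
        zero_add]

theorem robustW_le_discreteW {X : Type*} [MetricSpace X] {M N : ℕ}
    (x : Fin M → X) (y : Fin N → X) {p pt : Fin M → ℝ} {q qt : Fin N → ℝ} {ρ₁ ρ₂ : ℝ}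
    (hpt : IsProbVec pt) (hqt : IsProbVec qt)
    (hρ₁ : chiSqDiv pt p ≤ ρ₁) (hρ₂ : chiSqDiv qt q ≤ ρ₂) :
    robustW x y p q ρ₁ ρ₂ ≤ discreteW x y pt qt := by
  refine csInf_le ⟨0, ?_⟩ ⟨pt, qt, hpt, hqt, hρ₁, hρ₂, rfl⟩
  rintro w ⟨-, -, -, -, -, -, rfl⟩
  exact discreteW_nonneg _ _ _ _

theorem chiSqDiv_self {M : ℕ} (p : Fin M → ℝ) : chiSqDiv p p = 0 := by
  refine sum_eq_zero fun i _ => ?_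
  rcases eq_or_ne (p i) 0 with h | h
  · rw [h, zero_mul]
  · rw [div_self h]; ring

theorem isProbVec_uniform {N : ℕ} (hN : 1 ≤ N) : IsProbVec (fun _ : Fin N => 1 / (N : ℝ)) := by
  have hN' : (N : ℝ) ≠ 0 := by positivity
  refine ⟨fun _ => by positivity, ?_⟩
  rw [sum_const, card_univ, Fintype.card_fin, nsmul_eq_mul, mul_one_div_cancel hN']

theorem IsProbVec.append_zero_left {m n : ℕ} {p : Fin n → ℝ} (hp : IsProbVec p) :
    IsProbVec (Fin.append (fun _ : Fin m => (0 : ℝ)) p) := by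
  refine ⟨fun i => ?_, ?_⟩
  · refine Fin.addCases (fun i => ?_) (fun i => ?_) i
    · rw [Fin.append_left]
    · rw [Fin.append_right]; exact hp.1 i
  · simp only [Fin.sum_univ_add, Fin.append_left, Fin.append_right, sum_const_zero, zero_add,
      hp.2]

theorem chiSqDiv_append_zero_uniform {m n : ℕ} (hn : 1 ≤ n) :
    chiSqDiv (Fin.append (fun _ : Fin m => (0 : ℝ)) (fun _ : Fin n => 1 / (n : ℝ)))
        (fun _ => 1 / ((m : ℝ) + n)) = m / (2 * n) := by
  have hn' : (0 : ℝ) < n := by exact_mod_cast hn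
  rw [chiSqDiv, Fin.sum_univ_add]
  simp only [Fin.append_left, Fin.append_right, sum_const, card_univ, Fintype.card_fin,
    nsmul_eq_mul]
  field_simp
  ring

theorem robustW_outlier_bound_choice_general {X : Type*} [MetricSpace X] {na nc N : ℕ}
    (hnc : 1 ≤ nc) (hN : 1 ≤ N)
    (a : Fin na → X) (c : Fin nc → X) (y : Fin N → X)
    (γ : ℝ) (hγ : γ = (na : ℝ) / ((na : ℝ) + nc)) :
    robustW (Fin.append a c) y (fun _ => 1 / ((na : ℝ) + nc)) (fun _ => 1 / (N : ℝ))
        (γ / (2 * (1 - γ))) 0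
      ≤ discreteW c y (fun _ => 1 / (nc : ℝ)) (fun _ => 1 / (N : ℝ)) := by
  have hnc' : (0 : ℝ) < nc := by exact_mod_cast hnc
  have hbudget : γ / (2 * (1 - γ)) = na / (2 * nc) := by
    rw [hγ, one_sub_div (by positivity), add_sub_cancel_left]
    field_simp
  rw [← discreteW_append_zero_left a]
  refine robustW_le_discreteW _ _ (isProbVec_uniform hnc).append_zero_left (isProbVec_uniform hN)
    ?_ (chiSqDiv_self _).le
  rw [chiSqDiv_append_zero_uniform hnc, hbudget]

theorem robustW_outlier_bound_choice {X : Type*} [MetricSpace X] {na nc N : ℕ}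
    (hna : 1 ≤ na) (hnc : 1 ≤ nc) (hN : 1 ≤ N)
    (a : Fin na → X) (c : Fin nc → X) (y : Fin N → X)
    (k : ℝ) (hk : 1 ≤ k)
    (γ : ℝ) (hγ : γ = (na : ℝ) / ((na : ℝ) + nc))
    (hW : discreteW a c (fun _ => 1 / (na : ℝ)) (fun _ => 1 / (nc : ℝ))
        = k * discreteW c y (fun _ => 1 / (nc : ℝ)) (fun _ => 1 / (N : ℝ))) :
    robustW (Fin.append a c) y (fun _ => 1 / ((na : ℝ) + nc)) (fun _ => 1 / (N : ℝ))
        (γ / (2 * (1 - γ))) 0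
      ≤ discreteW c y (fun _ => 1 / (nc : ℝ)) (fun _ => 1 / (N : ℝ)) :=
  robustW_outlier_bound_choice_general hnc hN a c y γ hγ
end
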